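/- Symmetrized weak formulation: for φ continuous with rapid decay and ψ of polynomial growth, ∫ B(φ)ψ dv = (1/2) ∫∫∫ (ψ(v') + ψ(v'*) − ψ(v) − ψ(v*)) φ(v)φ(v*) ((v−v*)·ω)₊ dv dv* dω. -/

import Mathlib

open MeasureTheory

/-- ℝ³ as a Euclidean space. -/
noncomputable abbrev E3 := EuclideanSpace ℝ (Fin 3)

/-- The unit sphere S² in ℝ³. -/
noncomputable abbrev Sph := Metric.sphere (0 : E3) 1

/-- The surface measure on the unit sphere S². -/
noncomputable def sphMeasure : Measure Sph := (volume : Measure E3).toSphere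

/-- Post-collisional velocity `v' = v − ((v − v*)·ω) ω`. -/
noncomputable def vPost (v vs ω : E3) : E3 := v - (inner ℝ (v - vs) ω : ℝ) • ω

/-- Post-collisional velocity `v'* = v* + ((v − v*)·ω) ω`. -/
noncomputable def vsPost (v vs ω : E3) : E3 := vs + (inner ℝ (v - vs) ω : ℝ) • ω

/-- The hard-sphere Boltzmann collision integral for a spatially homogeneous `φ`:
`B(φ)(v) = ∫_{ℝ³×S²} (φ(v')φ(v'*) − φ(v)φ(v*)) ((v−v*)·ω)₊ dv* dω`. -/
noncomputable def Bop (φ : E3 → ℝ) (v : E3) : ℝ :=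
  ∫ vs : E3, ∫ ω : Sph,
    (φ (vPost v vs ω) * φ (vsPost v vs ω) - φ v * φ vs)
      * max (inner ℝ (v - vs) (ω : E3) : ℝ) 0 ∂sphMeasure

/-- `φ` is continuous with rapid decay at infinity. -/
def RapidDecay (φ : E3 → ℝ) : Prop :=
  Continuous φ ∧ ∀ n : ℕ, ∃ C : ℝ, ∀ v : E3, ‖v‖ ^ n * |φ v| ≤ C

/-- `ψ` is continuous with at most polynomial growth at infinity. -/
def PolyGrowth (ψ : E3 → ℝ) : Prop :=
  Continuous ψ ∧ ∃ C : ℝ, ∃ k : ℕ, ∀ v : E3, |ψ v| ≤ C * (1 + ‖v‖) ^ k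

/-!
Both sides are integrals over the phase space of triples `(v, v*, ω)` against `dv dv* dω`.
For fixed `ω` the map `(v, v*) ↦ (v'*, v')` is a linear involution, hence preserves Lebesgue
measure, and it leaves `⟪v - v*, ω⟫` unchanged; it turns the gain term `ψ(v) φ(v') φ(v'*)` of
`∫ B(φ) ψ` into `ψ(v'*) φ(v) φ(v*)`, so the left side is `∫ (ψ(v'*) - ψ(v)) φ(v) φ(v*) K`.
The reversal `(v, v*, ω) ↦ (v*, v, -ω)` preserves the measure and the kernel `K` and exchanges
`ψ(v')` with `ψ(v'*)` and `ψ(v)` with `ψ(v*)`, so the right side, factor `1/2` included, is the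
same integral. Integrability, needed for Fubini, comes from the rapid decay of `φ` against the
polynomial growth of `ψ`, the linear growth of `K` and energy conservation `‖v'*‖ ≤ ‖v‖ + ‖v*‖`.
-/

open Metric Function
open scoped RealInnerProductSpace

theorem LinearMap.measurePreserving_of_involutive {F : Type*} [NormedAddCommGroup F]
    [NormedSpace ℝ F] [FiniteDimensional ℝ F] [MeasurableSpace F] [BorelSpace F]
    (μ : Measure F) [μ.IsAddHaarMeasure] {f : F →ₗ[ℝ] F} (hf : Involutive f) :
    MeasurePreserving f μ μ := by
  have hdet : LinearMap.det f * LinearMap.det f = 1 := by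
    rw [← LinearMap.det_comp, show f ∘ₗ f = LinearMap.id from LinearMap.ext hf,
      LinearMap.det_id]
  have hne : LinearMap.det f ≠ 0 := left_ne_zero_of_mul_eq_one hdet
  refine ⟨f.continuous_of_finiteDimensional.measurable, ?_⟩
  rw [Measure.map_linearMap_addHaar_eq_smul_addHaar _ hne]
  rcases mul_self_eq_one_iff.1 hdet with h | h <;> simp [h]

theorem MeasureTheory.Measure.measurePreserving_neg_toSphere {E : Type*}
    [NormedAddCommGroup E] [NormedSpace ℝ E] [MeasurableSpace E] [BorelSpace E] (μ : Measure E)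
    [μ.IsNegInvariant] :
    MeasurePreserving (fun ω : sphere (0 : E) 1 => -ω) μ.toSphere μ.toSphere := by
  have hm : Measurable (fun ω : sphere (0 : E) 1 => -ω) := continuous_neg.measurable
  refine ⟨hm, Measure.ext fun s hs => ?_⟩
  have himage :
      ((↑) '' ((fun ω : sphere (0 : E) 1 => -ω) ⁻¹' s) : Set E) = -((↑) '' s) := by
    ext x
    simp only [Set.mem_image, Set.mem_preimage, Set.mem_neg]
    constructor
    · rintro ⟨ω, hω, rfl⟩
      exact ⟨-ω, hω, by simp⟩
    · rintro ⟨ω, hω, hx⟩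
      exact ⟨-ω, by simpa using hω, by simp [hx]⟩
  rw [Measure.map_apply hm hs, μ.toSphere_apply' (hm hs), μ.toSphere_apply' hs, himage,
    Set.smul_neg, Measure.measure_neg]

theorem Function.Involutive.measurableEmbedding {α : Type*} [MeasurableSpace α] {f : α → α}
    (hf : Involutive f) (hm : Measurable f) : MeasurableEmbedding f :=
  (MeasurableEquiv.ofInvolutive f hf hm).measurableEmbedding

theorem RapidDecay.exists_bound_one_add_norm_pow {φ : E3 → ℝ} (hφ : RapidDecay φ) (n : ℕ) :
    ∃ C, ∀ v, (1 + ‖v‖) ^ n * |φ v| ≤ C := by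
  obtain ⟨C₀, hC₀⟩ := hφ.2 0
  obtain ⟨C, hC⟩ := hφ.2 n
  refine ⟨2 ^ (n - 1) * (C₀ + C), fun v => ?_⟩
  have h₀ := hC₀ v
  rw [pow_zero, one_mul] at h₀
  calc (1 + ‖v‖) ^ n * |φ v| ≤ 2 ^ (n - 1) * (1 ^ n + ‖v‖ ^ n) * |φ v| :=
        mul_le_mul_of_nonneg_right (add_pow_le zero_le_one (norm_nonneg v) n) (abs_nonneg _)
    _ = 2 ^ (n - 1) * (|φ v| + ‖v‖ ^ n * |φ v|) := by ring
    _ ≤ 2 ^ (n - 1) * (C₀ + C) := by have := hC v; gcongr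

theorem RapidDecay.integrable_one_add_norm_pow_mul {φ : E3 → ℝ} (hφ : RapidDecay φ) (n : ℕ) :
    Integrable fun v => (1 + ‖v‖) ^ n * |φ v| := by
  obtain ⟨C, hC⟩ := hφ.exists_bound_one_add_norm_pow (n + 4)
  have hdim : (Module.finrank ℝ E3 : ℝ) < (4 : ℕ) := by
    rw [finrank_euclideanSpace_fin]; norm_num
  have hcont : Continuous fun v => (1 + ‖v‖) ^ n * |φ v| := by have := hφ.1; fun_prop
  refine ((integrable_one_add_norm hdim).const_mul C).mono' hcont.aestronglyMeasurable
    (.of_forall fun v => ?_)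
  have hpos : 0 < (1 + ‖v‖) ^ 4 := by positivity
  rw [Real.norm_of_nonneg (by positivity), Real.rpow_neg (by positivity), Real.rpow_natCast,
    ← div_eq_mul_inv, le_div_iff₀ hpos]
  calc (1 + ‖v‖) ^ n * |φ v| * (1 + ‖v‖) ^ 4 = (1 + ‖v‖) ^ (n + 4) * |φ v| := by ring
    _ ≤ C := hC v

namespace Boltzmann

section Collision

variable {E : Type*} [NormedAddCommGroup E] [InnerProductSpace ℝ E]

/-- `(v, v*) ↦ (v'*, v')`. The swap of the two particles keeps `⟪v - v*, ω⟫` unchanged instead of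
flipping its sign, so the one-sided kernel is invariant. -/
noncomputable def collisionSwap (ω : E) : E × E →ₗ[ℝ] E × E where
  toFun p := (p.2 + ⟪p.1 - p.2, ω⟫ • ω, p.1 - ⟪p.1 - p.2, ω⟫ • ω)
  map_add' p q := by
    simp only [Prod.fst_add, Prod.snd_add, add_sub_add_comm, inner_add_left, Prod.mk_add_mk]
    congr 1 <;> module
  map_smul' c p := by
    simp only [Prod.smul_fst, Prod.smul_snd, ← smul_sub, real_inner_smul_left, Prod.smul_mk,
      RingHom.id_apply]
    congr 1 <;> module

theorem collisionSwap_apply (ω : E) (p : E × E) :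
    collisionSwap ω p = (p.2 + ⟪p.1 - p.2, ω⟫ • ω, p.1 - ⟪p.1 - p.2, ω⟫ • ω) := rfl

variable {ω : E}

theorem inner_collisionSwap (hω : ‖ω‖ = 1) (p : E × E) :
    ⟪(collisionSwap ω p).1 - (collisionSwap ω p).2, ω⟫ = ⟪p.1 - p.2, ω⟫ := by
  have hωω : ⟪ω, ω⟫ = 1 := by rw [real_inner_self_eq_norm_sq, hω, one_pow]
  rw [collisionSwap_apply,
    show p.2 + ⟪p.1 - p.2, ω⟫ • ω - (p.1 - ⟪p.1 - p.2, ω⟫ • ω)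
      = (2 * ⟪p.1 - p.2, ω⟫) • ω - (p.1 - p.2) by module,
    inner_sub_left, real_inner_smul_left, hωω]
  ring

theorem collisionSwap_involutive (hω : ‖ω‖ = 1) : Involutive (collisionSwap ω) := by
  intro p
  have h := inner_collisionSwap hω p
  rw [collisionSwap_apply (ω := ω) (collisionSwap ω p), h, collisionSwap_apply]
  ext <;> simp only <;> module

theorem collisionSwap_neg_swap (ω : E) (p : E × E) :
    collisionSwap (-ω) p.swap = (collisionSwap ω p).swap := by
  simp only [collisionSwap_apply, Prod.fst_swap, Prod.snd_swap, inner_neg_right,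
    Prod.swap_prod_mk]
  rw [← neg_sub p.1 p.2, inner_neg_left]
  congr 1 <;> module

theorem norm_sq_add_norm_sq_collisionSwap (hω : ‖ω‖ = 1) (p : E × E) :
    ‖(collisionSwap ω p).1‖ ^ 2 + ‖(collisionSwap ω p).2‖ ^ 2 = ‖p.1‖ ^ 2 + ‖p.2‖ ^ 2 := by
  simp only [collisionSwap_apply, norm_add_sq_real, norm_sub_sq_real, inner_smul_right,
    norm_smul, hω, Real.norm_eq_abs, mul_one, sq_abs, inner_sub_left]
  ring

theorem norm_collisionSwap_fst_le (hω : ‖ω‖ = 1) (p : E × E) :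
    ‖(collisionSwap ω p).1‖ ≤ ‖p.1‖ + ‖p.2‖ := by
  have h := norm_sq_add_norm_sq_collisionSwap hω p
  nlinarith [norm_nonneg (collisionSwap ω p).1, norm_nonneg (collisionSwap ω p).2,
    norm_nonneg p.1, norm_nonneg p.2]

end Collision

section PhaseSpace

abbrev Phase := (E3 × E3) × Sph

noncomputable def phaseMeasure : Measure Phase := (volume.prod volume).prod sphMeasure

instance : IsFiniteMeasure sphMeasure := by unfold sphMeasure; infer_instance

noncomputable def kernel (z : Phase) : ℝ := max ⟪z.1.1 - z.1.2, z.2⟫ 0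

noncomputable def collision (z : Phase) : Phase := (collisionSwap (z.2 : E3) z.1, z.2)

noncomputable def reversal : Phase → Phase := Prod.map Prod.swap Neg.neg

theorem norm_coe_sph (ω : Sph) : ‖(ω : E3)‖ = 1 := norm_eq_of_mem_sphere ω

theorem collision_apply (z : Phase) :
    collision z = ((vsPost z.1.1 z.1.2 z.2, vPost z.1.1 z.1.2 z.2), z.2) := rfl

theorem continuous_collision : Continuous collision := by
  refine .prodMk ?_ continuous_snd
  simp only [collisionSwap_apply]
  fun_prop

theorem kernel_collision (z : Phase) : kernel (collision z) = kernel z := by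
  rw [kernel, collision, inner_collisionSwap (norm_coe_sph z.2), kernel]

theorem kernel_reversal (z : Phase) : kernel (reversal z) = kernel z := by
  simp only [kernel, reversal, Prod.map_fst, Prod.map_snd, Prod.fst_swap, Prod.snd_swap,
    coe_neg_sphere, inner_neg_right, ← inner_neg_left, neg_sub]

theorem collision_involutive : Involutive collision := fun z => by
  rw [collision, collision, collisionSwap_involutive (norm_coe_sph z.2)]

theorem reversal_involutive : Involutive reversal :=
  fun _ => Prod.ext (Prod.swap_swap _) (neg_neg _)

theorem collision_reversal (z : Phase) : collision (reversal z) = reversal (collision z) :=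
  Prod.ext (collisionSwap_neg_swap _ _) rfl

theorem measurePreserving_collision : MeasurePreserving collision phaseMeasure phaseMeasure := by
  have hskew :
      MeasurePreserving (fun p : Sph × (E3 × E3) => (p.1, collisionSwap (p.1 : E3) p.2))
      (sphMeasure.prod (volume.prod volume)) (sphMeasure.prod (volume.prod volume)) :=
    (MeasurePreserving.id sphMeasure).skew_product
      (by simp only [uncurry_def, collisionSwap_apply]; fun_prop : Continuous _).measurable
      (.of_forall fun ω => (LinearMap.measurePreserving_of_involutive _
        (collisionSwap_involutive (norm_coe_sph ω))).map_eq)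
  exact Measure.measurePreserving_swap.comp (hskew.comp Measure.measurePreserving_swap)

theorem measurePreserving_reversal : MeasurePreserving reversal phaseMeasure phaseMeasure :=
  Measure.measurePreserving_swap.prod (volume.measurePreserving_neg_toSphere)

end PhaseSpace

section Integrability

noncomputable def weighted (φ : E3 → ℝ) (f : Phase → ℝ) (z : Phase) : ℝ :=
  f z * (φ z.1.1 * φ z.1.2) * kernel z

theorem kernel_nonneg (z : Phase) : 0 ≤ kernel z := le_max_right _ _

theorem kernel_le (z : Phase) : kernel z ≤ ‖z.1.1‖ + ‖z.1.2‖ := by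
  refine max_le ((real_inner_le_norm _ _).trans ?_) (by positivity)
  rw [norm_coe_sph, mul_one]
  exact norm_sub_le _ _

theorem integrable_weighted_comp {φ ψ : E3 → ℝ} (hφ : RapidDecay φ) (hψ : PolyGrowth ψ)
    {X : Phase → E3} (hX : Continuous X) (hXle : ∀ z, ‖X z‖ ≤ ‖z.1.1‖ + ‖z.1.2‖) :
    Integrable (weighted φ (ψ ∘ X)) phaseMeasure := by
  obtain ⟨hψc, C, k, hC⟩ := hψ
  have hC₀ : 0 ≤ C := by simpa using (abs_nonneg _).trans (hC 0)
  set g : E3 → ℝ := fun v => (1 + ‖v‖) ^ (k + 1) * |φ v|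
  have hdom : Integrable (fun z : Phase => C * (g z.1.1 * g z.1.2)) phaseMeasure :=
    (((hφ.integrable_one_add_norm_pow_mul _).mul_prod
      (hφ.integrable_one_add_norm_pow_mul _)).comp_fst sphMeasure).const_mul C
  have hcont : Continuous (weighted φ (ψ ∘ X)) := by
    have := hφ.1
    unfold weighted kernel
    fun_prop
  refine hdom.mono' hcont.aestronglyMeasurable (.of_forall fun z => ?_)
  have := norm_nonneg z.1.1
  have := norm_nonneg z.1.2
  have hprod : 1 + ‖X z‖ ≤ (1 + ‖z.1.1‖) * (1 + ‖z.1.2‖) := by nlinarith [hXle z]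
  have hK : kernel z ≤ (1 + ‖z.1.1‖) * (1 + ‖z.1.2‖) := by nlinarith [kernel_le z]
  calc ‖weighted φ (ψ ∘ X) z‖ = |ψ (X z)| * (|φ z.1.1| * |φ z.1.2|) * kernel z := by
        rw [weighted, comp_apply, Real.norm_eq_abs, abs_mul, abs_mul, abs_mul,
          abs_of_nonneg (kernel_nonneg z)]
    _ ≤ C * ((1 + ‖z.1.1‖) * (1 + ‖z.1.2‖)) ^ k * (|φ z.1.1| * |φ z.1.2|)
          * ((1 + ‖z.1.1‖) * (1 + ‖z.1.2‖)) := by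
        gcongr
        exacts [kernel_nonneg z, (hC _).trans (by gcongr)]
    _ = C * (g z.1.1 * g z.1.2) := by simp only [g, mul_pow]; ring

end Integrability

section WeakFormulation

theorem measurableEmbedding_collision : MeasurableEmbedding collision :=
  collision_involutive.measurableEmbedding continuous_collision.measurable

theorem measurableEmbedding_reversal : MeasurableEmbedding reversal :=
  reversal_involutive.measurableEmbedding measurePreserving_reversal.measurable

variable {φ ψ : E3 → ℝ}

theorem weighted_comp_reversal (f : Phase → ℝ) :
    weighted φ (f ∘ reversal) = weighted φ f ∘ reversal := by
  ext z
  simp only [weighted, comp_apply, kernel_reversal]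
  simp only [reversal, Prod.map_fst, Prod.fst_swap, Prod.snd_swap, mul_comm (φ z.1.2)]

theorem integral_integral_integral_eq {f : E3 → E3 → Sph → ℝ}
    (hf : Integrable (fun z : Phase => f z.1.1 z.1.2 z.2) phaseMeasure) :
    ∫ v, ∫ vs, ∫ ω, f v vs ω ∂sphMeasure = ∫ z, f z.1.1 z.1.2 z.2 ∂phaseMeasure :=
  (integral_integral hf.integral_prod_left).trans (integral_integral hf)

theorem integral_weighted_comp_reversal (f : Phase → ℝ) :
    ∫ z, weighted φ (f ∘ reversal) z ∂phaseMeasure = ∫ z, weighted φ f z ∂phaseMeasure := by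
  rw [weighted_comp_reversal]
  exact measurePreserving_reversal.integral_comp measurableEmbedding_reversal _

theorem integrable_weighted_comp_reversal_iff {f : Phase → ℝ} :
    Integrable (weighted φ (f ∘ reversal)) phaseMeasure ↔
      Integrable (weighted φ f) phaseMeasure := by
  rw [weighted_comp_reversal]
  exact measurePreserving_reversal.integrable_comp_emb measurableEmbedding_reversal

theorem integrable_weighted_comp_collision (hφ : RapidDecay φ) (hψ : PolyGrowth ψ) :
    Integrable (weighted φ fun z => ψ (collision z).1.1) phaseMeasure :=
  integrable_weighted_comp hφ hψ
    (continuous_fst.comp (continuous_fst.comp continuous_collision))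
    (fun z => norm_collisionSwap_fst_le (norm_coe_sph z.2) z.1)

theorem integrable_weighted_comp_fst (hφ : RapidDecay φ) (hψ : PolyGrowth ψ) :
    Integrable (weighted φ fun z => ψ z.1.1) phaseMeasure :=
  integrable_weighted_comp hφ hψ (by fun_prop) (fun z => le_add_of_nonneg_right (norm_nonneg _))

theorem integral_Bop_mul (hφ : RapidDecay φ) (hψ : PolyGrowth ψ) :
    ∫ v, Bop φ v * ψ v = ∫ z, weighted φ (fun z => ψ (collision z).1.1) z ∂phaseMeasure
      - ∫ z, weighted φ (fun z => ψ z.1.1) z ∂phaseMeasure := by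
  set gain := weighted φ (fun z => ψ (collision z).1.1)
  set loss := weighted φ (fun z => ψ z.1.1)
  have hgain : Integrable gain phaseMeasure := integrable_weighted_comp_collision hφ hψ
  have hloss : Integrable loss phaseMeasure := integrable_weighted_comp_fst hφ hψ
  -- Undoing the collision turns the gain term `ψ(v) φ(v') φ(v'*)` into `ψ(v'*) φ(v) φ(v*)`.
  have hpoint (z : Phase) :
      (φ (vPost z.1.1 z.1.2 z.2) * φ (vsPost z.1.1 z.1.2 z.2) - φ z.1.1 * φ z.1.2)
        * max ⟪z.1.1 - z.1.2, z.2⟫ 0 * ψ z.1.1 = gain (collision z) - loss z := by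
    simp only [gain, loss, weighted, kernel_collision, collision_involutive z]
    rw [collision_apply, kernel]
    ring
  have hgainT : Integrable (fun z => gain (collision z)) phaseMeasure :=
    (measurePreserving_collision.integrable_comp_emb measurableEmbedding_collision).2 hgain
  simp only [Bop, ← integral_mul_const]
  rw [integral_integral_integral_eq
    ((hgainT.sub hloss).congr (.of_forall fun z => (hpoint z).symm))]
  simp only [hpoint]
  rw [integral_sub hgainT hloss,
    measurePreserving_collision.integral_comp measurableEmbedding_collision]

theorem integral_symmetrized (hφ : RapidDecay φ) (hψ : PolyGrowth ψ) :
    ∫ v, ∫ vs, ∫ ω, (ψ (vPost v vs ω) + ψ (vsPost v vs ω) - ψ v - ψ vs) * (φ v * φ vs)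
        * max ⟪v - vs, (ω : E3)⟫ 0 ∂sphMeasure
      = 2 * (∫ z, weighted φ (fun z => ψ (collision z).1.1) z ∂phaseMeasure
        - ∫ z, weighted φ (fun z => ψ z.1.1) z ∂phaseMeasure) := by
  set gain : Phase → ℝ := fun z => ψ (collision z).1.1
  set loss : Phase → ℝ := fun z => ψ z.1.1
  have hgain := integrable_weighted_comp_collision hφ hψ
  have hloss := integrable_weighted_comp_fst hφ hψ
  have hgain' := integrable_weighted_comp_reversal_iff.2 hgain
  have hloss' := integrable_weighted_comp_reversal_iff.2 hloss
  -- `gain ∘ reversal` is `ψ(v')` and `loss ∘ reversal` is `ψ(v*)`.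
  have hpoint (z : Phase) :
      (ψ (vPost z.1.1 z.1.2 z.2) + ψ (vsPost z.1.1 z.1.2 z.2) - ψ z.1.1 - ψ z.1.2)
        * (φ z.1.1 * φ z.1.2) * max ⟪z.1.1 - z.1.2, z.2⟫ 0
      = (weighted φ (gain ∘ reversal) + weighted φ gain - weighted φ loss
        - weighted φ (loss ∘ reversal)) z := by
    simp only [Pi.add_apply, Pi.sub_apply, weighted, gain, loss, comp_apply, collision_reversal,
      kernel]
    rw [collision_apply]
    simp only [reversal, Prod.map_fst, Prod.fst_swap]
    ring
  rw [integral_integral_integral_eq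
      ((((hgain'.add hgain).sub hloss).sub hloss').congr (.of_forall fun z => (hpoint z).symm))]
  simp only [hpoint]
  rw [integral_sub' ((hgain'.add hgain).sub hloss) hloss',
    integral_sub' (hgain'.add hgain) hloss, integral_add' hgain' hgain,
    integral_weighted_comp_reversal, integral_weighted_comp_reversal]
  ring

end WeakFormulation

end Boltzmann

/-- Symmetrized weak formulation of the Boltzmann collision operator:
`∫ B(φ) ψ dv = (1/2) ∫∫∫ (ψ(v') + ψ(v'*) − ψ(v) − ψ(v*)) φ(v)φ(v*) ((v−v*)·ω)₊ dv dv* dω`. -/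
theorem weak_formulation_symmetrized (φ ψ : E3 → ℝ)
    (hφ : RapidDecay φ) (hψ : PolyGrowth ψ) :
    ∫ v : E3, Bop φ v * ψ v
      = (1 / 2) * ∫ v : E3, ∫ vs : E3, ∫ ω : Sph,
          (ψ (vPost v vs ω) + ψ (vsPost v vs ω) - ψ v - ψ vs) * (φ v * φ vs)
            * max (inner ℝ (v - vs) (ω : E3) : ℝ) 0 ∂sphMeasure := by
  rw [Boltzmann.integral_Bop_mul hφ hψ, Boltzmann.integral_symmetrized hφ hψ]
  ring
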